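/- Let (X, μ) be a measure space, ν > 0, and let r, u_min, u_max : X → ℝ be measurable functions in L²(μ) with u_min ≤ u_max almost everywhere. Define u*(x) := max(u_min(x), min(u_max(x), −r(x)/ν)). Then u* is measurable, belongs to L²(μ), satisfies u_min ≤ u* ≤ u_max almost everywhere, and for every u ∈ L²(μ) with u_min ≤ u ≤ u_max almost everywhere, ∫_X (r + ν u*)(u − u*) dμ ≥ 0. -/

import Mathlib

/-!
Pointwise, `u*(x)` is the projection of `s = -r(x)/ν` onto the interval `[u_min(x), u_max(x)]`,
and the projection `p` onto an interval is characterised by `(s - p)(u - p) ≤ 0` for every `u`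
in it. Since `r + ν p = -ν (s - p)`, the integrand of the variational inequality is nonnegative
almost everywhere.
-/

open MeasureTheory

section Clamp

variable {α : Type*} [Ring α] [LinearOrder α] [IsStrictOrderedRing α]

theorem sub_clamp_mul_sub_clamp_nonpos {a b s u : α} (hau : a ≤ u) (hub : u ≤ b) :
    (s - max a (min b s)) * (u - max a (min b s)) ≤ 0 := by
  rcases le_total s a with hsa | has
  · rw [min_eq_right (hsa.trans (hau.trans hub)), max_eq_left hsa]
    exact mul_nonpos_of_nonpos_of_nonneg (sub_nonpos.2 hsa) (sub_nonneg.2 hau)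
  rcases le_total b s with hbs | hsb
  · rw [min_eq_left hbs, max_eq_right (hau.trans hub)]
    exact mul_nonpos_of_nonneg_of_nonpos (sub_nonneg.2 hbs) (sub_nonpos.2 hub)
  · rw [min_eq_right hsb, max_eq_right has, sub_self, zero_mul]

end Clamp

theorem clamp_variational_inequality {ν : ℝ} (hν : 0 < ν) {a b r u : ℝ}
    (hau : a ≤ u) (hub : u ≤ b) :
    0 ≤ (r + ν * max a (min b (-r / ν))) * (u - max a (min b (-r / ν))) := by
  set p := max a (min b (-r / ν))
  have hr : r + ν * p = -ν * (-r / ν - p) := by field_simp; ring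
  rw [hr, mul_assoc]
  exact mul_nonneg_of_nonpos_of_nonpos (neg_nonpos.2 hν.le) (sub_clamp_mul_sub_clamp_nonpos hau hub)

/-- Projection formula and variational inequality for the optimal control:
`u* := max(u_min, min(u_max, −r/ν))` is measurable, in `L²`, admissible, and satisfies
`∫ (r + ν u*)(u − u*) dμ ≥ 0` for every admissible `u ∈ L²`. -/
theorem projection_variational_inequality
    {X : Type*} [MeasurableSpace X] (μ : Measure X) (ν : ℝ) (hν : 0 < ν)
    (r umin umax : X → ℝ)
    (hr_meas : Measurable r) (humin_meas : Measurable umin) (humax_meas : Measurable umax)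
    (hr : MemLp r 2 μ) (humin : MemLp umin 2 μ) (humax : MemLp umax 2 μ)
    (hle : ∀ᵐ x ∂μ, umin x ≤ umax x) :
    Measurable (fun x => max (umin x) (min (umax x) (-r x / ν))) ∧
    MemLp (fun x => max (umin x) (min (umax x) (-r x / ν))) 2 μ ∧
    (∀ᵐ x ∂μ, umin x ≤ max (umin x) (min (umax x) (-r x / ν)) ∧
      max (umin x) (min (umax x) (-r x / ν)) ≤ umax x) ∧
    ∀ u : X → ℝ, Measurable u → MemLp u 2 μ →
      (∀ᵐ x ∂μ, umin x ≤ u x ∧ u x ≤ umax x) →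
      0 ≤ ∫ x, (r x + ν * max (umin x) (min (umax x) (-r x / ν)))
            * (u x - max (umin x) (min (umax x) (-r x / ν))) ∂μ := by
  have hs : MemLp (fun x => -r x / ν) 2 μ := by
    simpa only [div_eq_mul_inv, Pi.neg_apply] using hr.neg.mul_const ν⁻¹
  refine ⟨humin_meas.max (humax_meas.min (hr_meas.neg.div_const ν)),
    humin.sup (humax.inf hs), ?_, fun u _ _ hadm => ?_⟩
  · filter_upwards [hle] with x hx
    exact ⟨le_max_left _ _, max_le hx (min_le_left _ _)⟩
  · refine integral_nonneg_of_ae ?_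
    filter_upwards [hadm] with x ⟨hlo, hhi⟩
    exact clamp_variational_inequality hν hlo hhi
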